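/- arXiv:2310.15203 — 2 statements merged into one kernel-verified Lean document; each statement's English description precedes it below -/
import Mathlib

section
/- Suppose ℓ : [0,T] × ℝ → ℝ satisfies the bi-Lipschitz condition κ̲|y₁ − y₂| ≤ |ℓ(t,y₁) − ℓ(t,y₂)| ≤ κ̄|y₁ − y₂| for constants 0 < κ̲ < κ̄, and ℓ(t,·) is strictly increasing. Define L_t(η) = inf{x ≥ 0 : E[ℓ(t, x+η)] ≥ 0} for integrable η. Then for all integrable random variables η¹, η², |L_t(η¹) − L_t(η²)| ≤ (κ̄/κ̲) · E[|η¹ − η²|]. -/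
open MeasureTheory

lemma int_comp {Ω : Type*} [MeasurableSpace Ω] (μ : Measure Ω) [IsProbabilityMeasure μ]
    (f : ℝ → ℝ) (κu : ℝ) (hmeas : Measurable f)
    (hlip : ∀ y₁ y₂ : ℝ, |f y₁ - f y₂| ≤ κu * |y₁ - y₂|)
    (a : ℝ) (η : Ω → ℝ) (hη : Integrable η μ) :
    Integrable (fun ω => f (a + η ω)) μ := by
  have hκu : 0 ≤ κu := by
    have := hlip 1 0
    have h0 : (0:ℝ) ≤ |f 1 - f 0| := abs_nonneg _
    simp only [sub_zero, abs_one, mul_one] at this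
    linarith
  have hmeasf : AEStronglyMeasurable (fun ω => f (a + η ω)) μ :=
    (hmeas.comp_aemeasurable ((aemeasurable_const.add hη.aemeasurable))).aestronglyMeasurable
  refine Integrable.mono' ((hη.abs.const_mul κu).add (integrable_const (κu * |a| + |f 0|))) hmeasf ?_
  filter_upwards with ω
  have h1 := hlip (a + η ω) 0
  have h2 : |f (a + η ω)| ≤ |f (a + η ω) - f 0| + |f 0| := by
    calc |f (a + η ω)| = |(f (a + η ω) - f 0) + f 0| := by ring_nf
    _ ≤ |f (a + η ω) - f 0| + |f 0| := abs_add_le _ _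
  have h3 : |a + η ω| ≤ |a| + |η ω| := abs_add_le _ _
  have h4 : κu * |a + η ω - 0| ≤ κu * (|a| + |η ω|) := by
    rw [sub_zero]; exact mul_le_mul_of_nonneg_left h3 hκu
  simp only [Real.norm_eq_abs, Pi.add_apply]
  linarith

lemma one_side {Ω : Type*} [MeasurableSpace Ω] (μ : Measure Ω) [IsProbabilityMeasure μ]
    (f : ℝ → ℝ) (κl κu : ℝ) (hκl : 0 < κl) (hκ : κl ≤ κu)
    (hmeas : Measurable f) (hmono : Monotone f)
    (hbil : ∀ y₁ y₂ : ℝ,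
      κl * |y₁ - y₂| ≤ |f y₁ - f y₂| ∧ |f y₁ - f y₂| ≤ κu * |y₁ - y₂|)
    (η₁ η₂ : Ω → ℝ) (h₁ : Integrable η₁ μ) (h₂ : Integrable η₂ μ)
    (hfin₂ : {x : ℝ | 0 ≤ x ∧ 0 ≤ ∫ ω, f (x + η₂ ω) ∂μ}.Nonempty) :
    sInf {x : ℝ | 0 ≤ x ∧ 0 ≤ ∫ ω, f (x + η₁ ω) ∂μ} ≤
      sInf {x : ℝ | 0 ≤ x ∧ 0 ≤ ∫ ω, f (x + η₂ ω) ∂μ} +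
        (κu / κl) * ∫ ω, |η₁ ω - η₂ ω| ∂μ := by
  set c : ℝ := (κu / κl) * ∫ ω, |η₁ ω - η₂ ω| ∂μ with hc_def
  have hd_int : Integrable (fun ω => |η₁ ω - η₂ ω|) μ := (h₁.sub h₂).abs
  have hint_nonneg : 0 ≤ ∫ ω, |η₁ ω - η₂ ω| ∂μ :=
    integral_nonneg fun ω => abs_nonneg _
  have hc : 0 ≤ c := mul_nonneg (div_nonneg (by linarith) hκl.le) hint_nonneg
  have hlc : κl * c = κu * ∫ ω, |η₁ ω - η₂ ω| ∂μ := by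
    rw [hc_def]; field_simp
  have hbdd : BddBelow {x : ℝ | 0 ≤ x ∧ 0 ≤ ∫ ω, f (x + η₁ ω) ∂μ} :=
    ⟨0, fun y hy => hy.1⟩
  have key : ∀ x ∈ {x : ℝ | 0 ≤ x ∧ 0 ≤ ∫ ω, f (x + η₂ ω) ∂μ},
      (x + c) ∈ {x : ℝ | 0 ≤ x ∧ 0 ≤ ∫ ω, f (x + η₁ ω) ∂μ} := by
    intro x hx
    obtain ⟨hx0, hxI⟩ := hx
    refine ⟨by linarith, ?_⟩
    have hpt : ∀ ω, f (x + η₂ ω) + (κl * c - κu * |η₁ ω - η₂ ω|) ≤ f (x + c + η₁ ω) := by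
      intro ω
      set a := x + c + η₁ ω with ha
      set b := x + η₂ ω with hb
      have habs : |η₁ ω - η₂ ω| = |a - b - c| := by
        congr 1; rw [ha, hb]; ring
      obtain ⟨hlo, hhi⟩ := hbil a b
      have habs' : -(a - b - c) ≤ |η₁ ω - η₂ ω| := by
        rw [habs]; exact neg_le_abs _
      rcases le_or_gt b a with hab | hab
      · have hfab : f b ≤ f a := hmono hab
        rw [abs_of_nonneg (by linarith : (0:ℝ) ≤ a - b)] at hlo
        rw [abs_of_nonneg (sub_nonneg.mpr hfab)] at hlo
        nlinarith [abs_nonneg (η₁ ω - η₂ ω)]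
      · have hfab : f a ≤ f b := hmono hab.le
        rw [abs_of_neg (by linarith : a - b < 0)] at hhi
        rw [abs_sub_comm, abs_of_nonneg (sub_nonneg.mpr hfab)] at hhi
        nlinarith [abs_nonneg (η₁ ω - η₂ ω)]
    have hIg : Integrable (fun ω => f (x + η₂ ω)) μ :=
      int_comp μ f κu hmeas (fun y₁ y₂ => (hbil y₁ y₂).2) _ _ h₂
    have hIh : Integrable (fun ω => κu * |η₁ ω - η₂ ω|) μ := hd_int.const_mul κu
    have hI1 : Integrable (fun ω => f (x + c + η₁ ω)) μ :=
      int_comp μ f κu hmeas (fun y₁ y₂ => (hbil y₁ y₂).2) _ _ h₁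
    have hI2 : Integrable (fun ω => f (x + η₂ ω) + (κl * c - κu * |η₁ ω - η₂ ω|)) μ :=
      hIg.add ((integrable_const (κl * c)).sub hIh)
    have hmonoI : ∫ ω, (f (x + η₂ ω) + (κl * c - κu * |η₁ ω - η₂ ω|)) ∂μ ≤
        ∫ ω, f (x + c + η₁ ω) ∂μ :=
      integral_mono hI2 hI1 hpt
    have h5 : ∫ ω, (f (x + η₂ ω) + (κl * c - κu * |η₁ ω - η₂ ω|)) ∂μ =
        (∫ ω, f (x + η₂ ω) ∂μ) + ∫ ω, (κl * c - κu * |η₁ ω - η₂ ω|) ∂μ :=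
      integral_add hIg ((integrable_const (κl * c)).sub hIh)
    have h6 : ∫ ω, (κl * c - κu * |η₁ ω - η₂ ω|) ∂μ =
        κl * c - κu * ∫ ω, |η₁ ω - η₂ ω| ∂μ := by
      rw [integral_sub (integrable_const (κl * c)) hIh, integral_const,
        integral_const_mul]
      simp
    have heq : ∫ ω, (f (x + η₂ ω) + (κl * c - κu * |η₁ ω - η₂ ω|)) ∂μ =
        ∫ ω, f (x + η₂ ω) ∂μ := by
      rw [h5, h6, hlc]; ring
    linarith
  have h1 : ∀ x ∈ {x : ℝ | 0 ≤ x ∧ 0 ≤ ∫ ω, f (x + η₂ ω) ∂μ},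
      sInf {x : ℝ | 0 ≤ x ∧ 0 ≤ ∫ ω, f (x + η₁ ω) ∂μ} ≤ x + c :=
    fun x hx => csInf_le hbdd (key x hx)
  have h2 : sInf {x : ℝ | 0 ≤ x ∧ 0 ≤ ∫ ω, f (x + η₁ ω) ∂μ} - c ≤
      sInf {x : ℝ | 0 ≤ x ∧ 0 ≤ ∫ ω, f (x + η₂ ω) ∂μ} :=
    le_csInf hfin₂ fun x hx => by linarith [h1 x hx]
  linarith

/-- Lipschitz estimate for the operator `L_t(η) = inf {x ≥ 0 : E[ℓ(t, x + η)] ≥ 0}`: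
under the bi-Lipschitz assumption on `ℓ`, `|L_t(η¹) - L_t(η²)| ≤ (κ̄/κ̲) E[|η¹ - η²|]`. -/
theorem stmt1
    {Ω : Type*} [MeasurableSpace Ω] (μ : Measure Ω) [IsProbabilityMeasure μ]
    (T t : ℝ) (ht : t ∈ Set.Icc (0 : ℝ) T)
    (ℓ : ℝ → ℝ → ℝ) (κl κu : ℝ) (hκl : 0 < κl) (hκ : κl < κu)
    (hmeas : ∀ s, Measurable (ℓ s))
    (hmono : ∀ s, StrictMono (ℓ s))
    (hbil : ∀ s y₁ y₂ : ℝ,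
      κl * |y₁ - y₂| ≤ |ℓ s y₁ - ℓ s y₂| ∧ |ℓ s y₁ - ℓ s y₂| ≤ κu * |y₁ - y₂|)
    (η₁ η₂ : Ω → ℝ) (h₁ : Integrable η₁ μ) (h₂ : Integrable η₂ μ)
    (hfin₁ : {x : ℝ | 0 ≤ x ∧ 0 ≤ ∫ ω, ℓ t (x + η₁ ω) ∂μ}.Nonempty)
    (hfin₂ : {x : ℝ | 0 ≤ x ∧ 0 ≤ ∫ ω, ℓ t (x + η₂ ω) ∂μ}.Nonempty) :
    |sInf {x : ℝ | 0 ≤ x ∧ 0 ≤ ∫ ω, ℓ t (x + η₁ ω) ∂μ} -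
      sInf {x : ℝ | 0 ≤ x ∧ 0 ≤ ∫ ω, ℓ t (x + η₂ ω) ∂μ}| ≤
      (κu / κl) * ∫ ω, |η₁ ω - η₂ ω| ∂μ := by
  have hA := one_side μ (ℓ t) κl κu hκl hκ.le (hmeas t) (hmono t).monotone (hbil t)
    η₁ η₂ h₁ h₂ hfin₂
  have hB := one_side μ (ℓ t) κl κu hκl hκ.le (hmeas t) (hmono t).monotone (hbil t)
    η₂ η₁ h₂ h₁ hfin₁
  have hsymm : ∫ ω, |η₂ ω - η₁ ω| ∂μ = ∫ ω, |η₁ ω - η₂ ω| ∂μ := by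
    simp only [abs_sub_comm]
  rw [hsymm] at hB
  rw [abs_sub_le_iff]
  constructor <;> linarith
end

section
/- Let η : [0,T] → L¹(Ω) be a process with right-continuous sample evaluation t ↦ η_t in L¹, and suppose ℓ(t,y) is uniformly continuous in (t,y) uniformly in ω, strictly increasing in y, with |ℓ(t,y)| ≤ C(1+|y|). Then the map t ↦ L_t(η_t) := inf{x ≥ 0 : E[ℓ(t, x + η_t)] ≥ 0} is right-continuous on [0,T]. -/
/-!
Write `F s x = E[ℓ(s, x + η_s)]`. Uniform continuity of `ℓ`, chained along a segment, gives
`|ℓ(s, y) - ℓ(t, y')| ≤ ε + K |y - y'|` for `s` close to `t`; since `η_s → η_t` in `L¹`, this makes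
`F s x → F t x` for every fixed `x` as `s ↓ t`. Each `F s` is increasing and `F t` strictly so,
hence convergence at the two points `L_t ± ε` already traps `L_s` in `(L_t - ε, L_t + ε)`.
-/

open MeasureTheory Filter Topology

theorem dist_comp_le_mul_div_add_one {α : Type*} [PseudoMetricSpace α] {f : ℝ → α}
    {δ ε : ℝ} (hδ : 0 < δ) (h : ∀ a b, |a - b| ≤ δ → dist (f a) (f b) ≤ ε) (a b : ℝ) :
    dist (f a) (f b) ≤ ε * (|a - b| / δ + 1) := by
  have hε : 0 ≤ ε := dist_self (f a) ▸ h a a (by simpa using hδ.le)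
  have chain : ∀ n : ℕ, ∀ a b, |a - b| ≤ n * δ → dist (f a) (f b) ≤ n * ε := by
    intro n
    induction n with
    | zero =>
      intro a b hab
      simp [sub_eq_zero.mp (by simpa using hab : a - b = 0)]
    | succ n ih =>
      intro a b hab
      have hn : (0 : ℝ) < n + 1 := by positivity
      set c := a + n / (n + 1) * (b - a)
      have hac : |a - c| = n / (n + 1) * |a - b| := by
        rw [show a - c = n / (n + 1) * (a - b) by ring, abs_mul,
          abs_of_nonneg (by positivity)]
      have hcb : |c - b| = |a - b| / (n + 1) := by
        rw [show c - b = (a - b) / (n + 1) by simp only [c]; field_simp; ring, abs_div,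
          abs_of_pos hn]
      push_cast at hab ⊢
      calc dist (f a) (f b) ≤ dist (f a) (f c) + dist (f c) (f b) := dist_triangle _ _ _
        _ ≤ n * ε + ε := by
          gcongr
          · refine ih a c ?_
            rw [hac, div_mul_eq_mul_div, div_le_iff₀ hn]
            nlinarith [n.cast_nonneg (α := ℝ)]
          · exact h c b (by rw [hcb, div_le_iff₀ hn]; linarith)
        _ = (n + 1) * ε := by ring
  have hceil := Nat.ceil_lt_add_one (div_nonneg (abs_nonneg (a - b)) hδ.le)
  calc dist (f a) (f b) ≤ ⌈|a - b| / δ⌉₊ * ε :=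
        chain _ a b ((div_le_iff₀ hδ).mp (Nat.le_ceil _))
    _ ≤ ε * (|a - b| / δ + 1) := by nlinarith

theorem UniformContinuous.exists_dist_le_add_mul {α : Type*} [PseudoMetricSpace α] {g : ℝ → α}
    (hg : UniformContinuous g) {ε : ℝ} (hε : 0 < ε) :
    ∃ K, ∀ y y', dist (g y) (g y') ≤ ε + K * |y - y'| := by
  obtain ⟨δ, hδ, hgδ⟩ := Metric.uniformContinuous_iff.mp hg ε hε
  refine ⟨ε / (δ / 2), fun y y' => ?_⟩
  have := dist_comp_le_mul_div_add_one (f := g) (half_pos hδ)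
    (fun a b hab => (hgδ (by rw [Real.dist_eq]; linarith)).le) y y'
  calc dist (g y) (g y') ≤ ε * (|y - y'| / (δ / 2) + 1) := this
    _ = ε + ε / (δ / 2) * |y - y'| := by ring

theorem exists_abs_sub_le_add_mul_of_uniformContinuous {f : ℝ → ℝ → ℝ}
    (hf : UniformContinuous (fun p : ℝ × ℝ => f p.1 p.2)) {ε : ℝ} (hε : 0 < ε) :
    ∃ δ > 0, ∃ K, ∀ s t y y', |s - t| ≤ δ → |f s y - f t y'| ≤ ε + K * |y - y'| := by
  obtain ⟨δ, hδ, hfδ⟩ := Metric.uniformContinuous_iff.mp hf (ε / 2) (half_pos hε)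
  have hfδ' : ∀ s t y y', |s - t| ≤ δ / 2 → |y - y'| ≤ δ / 2 → |f s y - f t y'| ≤ ε / 2 := by
    intro s t y y' hst hyy'
    refine (hfδ (a := (s, y)) (b := (t, y')) ?_).le
    rw [Prod.dist_eq, Real.dist_eq, Real.dist_eq]
    exact max_lt (by linarith) (by linarith)
  refine ⟨δ / 2, half_pos hδ, ε / 2 / (δ / 2), fun s t y y' hst => ?_⟩
  have hy : |f s y - f s y'| ≤ ε / 2 * (|y - y'| / (δ / 2) + 1) :=
    dist_comp_le_mul_div_add_one (f := f s) (half_pos hδ)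
      (fun a b hab => hfδ' s s a b (by simpa using (half_pos hδ).le) hab) y y'
  have hs : |f s y' - f t y'| ≤ ε / 2 := hfδ' s t y' y' hst (by simpa using (half_pos hδ).le)
  calc |f s y - f t y'| ≤ |f s y - f s y'| + |f s y' - f t y'| := abs_sub_le _ _ _
    _ ≤ ε / 2 * (|y - y'| / (δ / 2) + 1) + ε / 2 := add_le_add hy hs
    _ = ε + ε / 2 / (δ / 2) * |y - y'| := by ring

section Integral

variable {Ω : Type*} [MeasurableSpace Ω] {μ : Measure Ω}

theorem MeasureTheory.Integrable.comp_uniformContinuous [IsFiniteMeasure μ] {g : ℝ → ℝ}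
    (hg : UniformContinuous g) {X : Ω → ℝ} (hX : Integrable X μ) :
    Integrable (fun ω => g (X ω)) μ := by
  obtain ⟨K, hK⟩ := hg.exists_dist_le_add_mul one_pos
  refine ((integrable_const (|g 0| + 1)).add (hX.abs.const_mul K)).mono'
    (hg.continuous.comp_aestronglyMeasurable hX.1) (ae_of_all _ fun ω => ?_)
  have := hK (X ω) 0
  rw [Real.dist_eq, sub_zero] at this
  rw [Real.norm_eq_abs, Pi.add_apply]
  linarith [abs_sub_abs_le_abs_sub (g (X ω)) (g 0)]

theorem integral_lt_integral_of_forall_lt [NeZero μ] {f g : Ω → ℝ} (hf : Integrable f μ)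
    (hg : Integrable g μ) (h : ∀ ω, f ω < g ω) : ∫ ω, f ω ∂μ < ∫ ω, g ω ∂μ := by
  rw [← sub_pos, ← integral_sub hg hf, integral_pos_iff_support_of_nonneg
    (fun ω => (sub_pos.mpr (h ω)).le) (hg.sub hf)]
  have : (Function.support fun ω => g ω - f ω) = Set.univ :=
    Set.eq_univ_of_forall fun ω => (sub_pos.mpr (h ω)).ne'
  simpa [this] using NeZero.ne μ

theorem tendsto_integral_of_uniformContinuous [IsFiniteMeasure μ] {ι : Type*} {l : Filter ι}
    {f : ℝ → ℝ → ℝ} (hf : UniformContinuous (fun p : ℝ × ℝ => f p.1 p.2))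
    {s : ι → ℝ} {t : ℝ} (hs : Tendsto s l (𝓝 t)) {X : ι → Ω → ℝ} {Y : Ω → ℝ}
    (hX : ∀ᶠ i in l, Integrable (X i) μ) (hY : Integrable Y μ)
    (hXY : Tendsto (fun i => ∫ ω, |X i ω - Y ω| ∂μ) l (𝓝 0)) :
    Tendsto (fun i => ∫ ω, f (s i) (X i ω) ∂μ) l (𝓝 (∫ ω, f t (Y ω) ∂μ)) := by
  have hf_sec : ∀ s, UniformContinuous (f s) := fun s =>
    hf.comp (uniformContinuous_const.prodMk uniformContinuous_id)
  rw [Metric.tendsto_nhds]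
  intro ε hε
  set c := μ.real Set.univ + 1
  have hc : 0 < c := by positivity
  obtain ⟨δ, hδ, K, hK⟩ :=
    exists_abs_sub_le_add_mul_of_uniformContinuous hf (ε := ε / (2 * c)) (by positivity)
  have hs_near : ∀ᶠ i in l, dist (s i) t < δ := Metric.tendsto_nhds.mp hs δ hδ
  have hXY_small : ∀ᶠ i in l, K * ∫ ω, |X i ω - Y ω| ∂μ < ε / 2 :=
    (mul_zero K ▸ hXY.const_mul K).eventually_lt_const (half_pos hε)
  filter_upwards [hX, hs_near, hXY_small] with i hXi hsi hKi
  have hdiff : Integrable (fun ω => |X i ω - Y ω|) μ := (hXi.sub hY).abs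
  have hbound : Integrable (fun ω => ε / (2 * c) + K * |X i ω - Y ω|) μ :=
    (integrable_const _).add (hdiff.const_mul K)
  rw [Real.dist_eq] at hsi ⊢
  rw [← integral_sub (hXi.comp_uniformContinuous (hf_sec _))
    (hY.comp_uniformContinuous (hf_sec _))]
  calc |∫ ω, f (s i) (X i ω) - f t (Y ω) ∂μ|
      ≤ ∫ ω, ε / (2 * c) + K * |X i ω - Y ω| ∂μ :=
        norm_integral_le_of_norm_le hbound (ae_of_all _ fun ω => hK _ _ _ _ hsi.le :
          ∀ᵐ ω ∂μ, ‖f (s i) (X i ω) - f t (Y ω)‖ ≤ _)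
    _ = ε / (2 * c) * μ.real Set.univ + K * ∫ ω, |X i ω - Y ω| ∂μ := by
        rw [integral_add (integrable_const _) (hdiff.const_mul K), integral_const,
          integral_const_mul, smul_eq_mul, mul_comm]
    _ < ε := by
        have : ε / (2 * c) * μ.real Set.univ < ε / 2 := by
          rw [div_mul_eq_mul_div, div_lt_iff₀ (by positivity)]
          nlinarith
        linarith

end Integral

theorem tendsto_sInf_nonneg_le_of_tendsto {ι : Type*} {l : Filter ι} {F : ι → ℝ → ℝ}
    {G : ℝ → ℝ} (hG : StrictMono G) (hG_ne : {x | 0 ≤ x ∧ 0 ≤ G x}.Nonempty)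
    (hF : ∀ᶠ i in l, Monotone (F i)) (hF_ne : ∀ᶠ i in l, {x | 0 ≤ x ∧ 0 ≤ F i x}.Nonempty)
    (hlim : ∀ x, Tendsto (fun i => F i x) l (𝓝 (G x))) :
    Tendsto (fun i => sInf {x | 0 ≤ x ∧ 0 ≤ F i x}) l (𝓝 (sInf {x | 0 ≤ x ∧ 0 ≤ G x})) := by
  have hbdd : ∀ H : ℝ → ℝ, BddBelow {x | 0 ≤ x ∧ 0 ≤ H x} := fun _ => ⟨0, fun _ hx => hx.1⟩
  set L := sInf {x | 0 ≤ x ∧ 0 ≤ G x}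
  rw [tendsto_order]
  constructor
  · intro a ha
    rcases lt_or_ge a 0 with ha0 | ha0
    · filter_upwards [hF_ne] with i hi
      exact ha0.trans_le (le_csInf hi fun _ hx => hx.1)
    · have hGa : G ((a + L) / 2) < 0 := by
        by_contra! h
        have := csInf_le (hbdd G) ⟨by linarith, h⟩
        linarith
      filter_upwards [hF, hF_ne, (hlim _).eventually_lt_const hGa] with i hmono hi hFa
      refine (by linarith : a < (a + L) / 2).trans_le (le_csInf hi fun x hx => ?_)
      by_contra! hxa
      linarith [hmono hxa.le, hx.2]
  · intro b hb
    obtain ⟨x, hx, hxb⟩ := exists_lt_of_csInf_lt hG_ne hb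
    have hGb : 0 < G ((x + b) / 2) := hx.2.trans_lt (hG (by linarith))
    filter_upwards [(hlim _).eventually_const_lt hGb] with i hFb
    exact (csInf_le (hbdd (F i)) ⟨by linarith [hx.1], hFb.le⟩).trans_lt (by linarith)

theorem stmt2_general
    {Ω : Type*} [MeasurableSpace Ω] (μ : Measure Ω) [IsProbabilityMeasure μ]
    (T : ℝ)
    (η : ℝ → Ω → ℝ)
    (hint : ∀ t ∈ Set.Icc (0 : ℝ) T, Integrable (η t) μ)
    (hrc : ∀ t ∈ Set.Ico (0 : ℝ) T,
      Filter.Tendsto (fun s => ∫ ω, |η s ω - η t ω| ∂μ)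
        (nhdsWithin t (Set.Ici t)) (nhds 0))
    (ℓ : ℝ → ℝ → ℝ)
    (hUC : UniformContinuous (fun p : ℝ × ℝ => ℓ p.1 p.2))
    (hmono : ∀ t, StrictMono (ℓ t))
    (hfin : ∀ t ∈ Set.Icc (0 : ℝ) T,
      {x : ℝ | 0 ≤ x ∧ 0 ≤ ∫ ω, ℓ t (x + η t ω) ∂μ}.Nonempty) :
    ∀ t ∈ Set.Ico (0 : ℝ) T,
      ContinuousWithinAt
        (fun s => sInf {x : ℝ | 0 ≤ x ∧ 0 ≤ ∫ ω, ℓ s (x + η s ω) ∂μ})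
        (Set.Ici t) t := by
  intro t ht
  have ht' : t ∈ Set.Icc 0 T := Set.Ico_subset_Icc_self ht
  have hnear : ∀ᶠ s in 𝓝[≥] t, s ∈ Set.Icc 0 T :=
    mem_of_superset (Ico_mem_nhdsGE ht.2) fun s hs => ⟨ht.1.trans hs.1, hs.2.le⟩
  have hshift : ∀ x, UniformContinuous (fun p : ℝ × ℝ => ℓ p.1 (x + p.2)) := fun x =>
    hUC.comp (uniformContinuous_fst.prodMk (uniformContinuous_const.add uniformContinuous_snd))
  have hint_ℓ : ∀ s ∈ Set.Icc 0 T, ∀ x, Integrable (fun ω => ℓ s (x + η s ω)) μ :=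
    fun s hs x => (hint s hs).comp_uniformContinuous
      ((hshift x).comp (uniformContinuous_const.prodMk uniformContinuous_id))
  refine tendsto_sInf_nonneg_le_of_tendsto (fun x y hxy => ?_) (hfin t ht') ?_
    (by filter_upwards [hnear] with s hs using hfin s hs) fun x => ?_
  · exact integral_lt_integral_of_forall_lt (hint_ℓ t ht' x) (hint_ℓ t ht' y)
      fun ω => hmono t (by linarith)
  · filter_upwards [hnear] with s hs x y hxy
    exact integral_mono (hint_ℓ s hs x) (hint_ℓ s hs y) fun ω => (hmono s).monotone (by linarith)
  · exact tendsto_integral_of_uniformContinuous (f := fun s y => ℓ s (x + y)) (X := η)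
      (hshift x) (tendsto_id.mono_left nhdsWithin_le_nhds) (by filter_upwards [hnear] with s hs using hint s hs) (hint t ht') (hrc t ht)

/-- Right-continuity of `t ↦ L_t(η_t)`: if `η` is right-continuous in `L¹` and `ℓ` is
uniformly continuous in `(t,y)`, strictly increasing in `y` and of linear growth, then
`t ↦ inf {x ≥ 0 : E[ℓ(t, x + η_t)] ≥ 0}` is right-continuous on `[0,T]`. -/
theorem stmt2
    {Ω : Type*} [MeasurableSpace Ω] (μ : Measure Ω) [IsProbabilityMeasure μ]
    (T : ℝ) (hT : 0 < T)
    (η : ℝ → Ω → ℝ)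
    (hint : ∀ t ∈ Set.Icc (0 : ℝ) T, Integrable (η t) μ)
    (hrc : ∀ t ∈ Set.Ico (0 : ℝ) T,
      Filter.Tendsto (fun s => ∫ ω, |η s ω - η t ω| ∂μ)
        (nhdsWithin t (Set.Ici t)) (nhds 0))
    (ℓ : ℝ → ℝ → ℝ)
    (hUC : UniformContinuous (fun p : ℝ × ℝ => ℓ p.1 p.2))
    (hmono : ∀ t, StrictMono (ℓ t))
    (hgrowth : ∃ C : ℝ, 0 ≤ C ∧ ∀ t y : ℝ, |ℓ t y| ≤ C * (1 + |y|))
    (hfin : ∀ t ∈ Set.Icc (0 : ℝ) T,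
      {x : ℝ | 0 ≤ x ∧ 0 ≤ ∫ ω, ℓ t (x + η t ω) ∂μ}.Nonempty) :
    ∀ t ∈ Set.Ico (0 : ℝ) T,
      ContinuousWithinAt
        (fun s => sInf {x : ℝ | 0 ≤ x ∧ 0 ≤ ∫ ω, ℓ s (x + η s ω) ∂μ})
        (Set.Ici t) t :=
  stmt2_general μ T η hint hrc ℓ hUC hmono hfin
end
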